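/- Any two ratio-balanced maximum flows are equivalent: if f and g are both maximum flows satisfying the ratio constraint, then r_j^f = r_j^g for every account j ∈ A. -/

import Mathlib

open Finset
open scoped Classical

variable {S A : Type*} [Fintype S] [Fintype A]

/-- A feasible flow: nonnegative on edges, zero off edges, outflow of each security
bounded by its value, inflow of each account bounded by its exposure. -/
def Feasible (E : Finset (S × A)) (v : S → ℝ) (e : A → ℝ) (f : S → A → ℝ) : Prop :=
  (∀ i j, (i, j) ∈ E → 0 ≤ f i j) ∧
  (∀ i j, (i, j) ∉ E → f i j = 0) ∧
  (∀ i : S, ∑ j ∈ Finset.univ.filter (fun j => (i, j) ∈ E), f i j ≤ v i) ∧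
  (∀ j : A, ∑ i ∈ Finset.univ.filter (fun i => (i, j) ∈ E), f i j ≤ e j)

/-- The value of a flow: total flow on all edges. -/
noncomputable def flowValue (E : Finset (S × A)) (f : S → A → ℝ) : ℝ :=
  ∑ p ∈ E, f p.1 p.2

/-- The risk ratio of account `j` under a flow `f`. -/
noncomputable def riskRatio (E : Finset (S × A)) (e : A → ℝ) (f : S → A → ℝ) (j : A) : ℝ :=
  (e j - ∑ i ∈ Finset.univ.filter (fun i => (i, j) ∈ E), f i j) / e j

/-- A maximum flow: feasible, with value maximal among feasible flows. -/
def IsMaxFlow (E : Finset (S × A)) (v : S → ℝ) (e : A → ℝ) (f : S → A → ℝ) : Prop :=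
  Feasible E v e f ∧ ∀ g : S → A → ℝ, Feasible E v e g → flowValue E g ≤ flowValue E f

/-- The ratio constraint: if `f` sends positive flow from `i` to `j` and `i` could
also be used for `l`, then the risk ratio of `j` is at least that of `l`. -/
def RatioConstraint (E : Finset (S × A)) (e : A → ℝ) (f : S → A → ℝ) : Prop :=
  ∀ i j l, (i, j) ∈ E → 0 < f i j → (i, l) ∈ E →
    riskRatio E e f l ≤ riskRatio E e f j

/-- A ratio-balanced (maximum) flow. -/
def RatioBalanced (E : Finset (S × A)) (v : S → ℝ) (e : A → ℝ) (f : S → A → ℝ) : Prop :=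
  IsMaxFlow E v e f ∧ RatioConstraint E e f

/-- The weighted sum of squared risk ratios `∑ j, e j * (r_j^f)^2`. -/
noncomputable def objective (E : Finset (S × A)) (e : A → ℝ) (f : S → A → ℝ) : ℝ :=
  ∑ j : A, e j * (riskRatio E e f j) ^ 2

/-- An MWSR flow: a feasible flow minimizing the weighted sum of squared risk
ratios among all feasible flows. -/
def MWSR (E : Finset (S × A)) (v : S → ℝ) (e : A → ℝ) (f : S → A → ℝ) : Prop :=
  Feasible E v e f ∧ ∀ g : S → A → ℝ, Feasible E v e g → objective E e f ≤ objective E e g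

/-!
A ratio-balanced flow `f` satisfies the variational inequality
`∑ⱼ r_j^f · inflow_j^g ≤ ∑ⱼ r_j^f · inflow_j^f` for every feasible `g`: each security sends
all its flow to neighbours of maximal ratio `ρ`, and it is saturated unless `ρ = 0`, because a
maximum flow admits no augmentation along a single edge. Adding the inequalities for `f`
against `g` and for `g` against `f` gives `∑ⱼ (r_j^f - r_j^g)(inflow_j^f - inflow_j^g) ≥ 0`,
while `inflow_j^f - inflow_j^g = -e_j (r_j^f - r_j^g)`; hence `∑ⱼ e_j (r_j^f - r_j^g)² ≤ 0`.
-/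

noncomputable def inflow (E : Finset (S × A)) (f : S → A → ℝ) (j : A) : ℝ :=
  ∑ i ∈ Finset.univ.filter (fun i => (i, j) ∈ E), f i j

noncomputable def outflow (E : Finset (S × A)) (f : S → A → ℝ) (i : S) : ℝ :=
  ∑ j ∈ Finset.univ.filter (fun j => (i, j) ∈ E), f i j

omit [Fintype A] in
theorem riskRatio_eq (E : Finset (S × A)) (e : A → ℝ) (f : S → A → ℝ) (j : A) :
    riskRatio E e f j = (e j - inflow E f j) / e j := rfl

omit [Fintype A] in
theorem inflow_sub_inflow (E : Finset (S × A)) (e : A → ℝ) (f g : S → A → ℝ) {j : A}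
    (hj : e j ≠ 0) :
    inflow E f j - inflow E g j = e j * (riskRatio E e g j - riskRatio E e f j) := by
  rw [riskRatio_eq, riskRatio_eq]
  field_simp
  ring

theorem Feasible.riskRatio_nonneg {E : Finset (S × A)} {v : S → ℝ} {e : A → ℝ}
    {f : S → A → ℝ} (hf : Feasible E v e f) {j : A} (hj : 0 < e j) :
    0 ≤ riskRatio E e f j :=
  div_nonneg (sub_nonneg.mpr (hf.2.2.2 j)) hj.le

omit [Fintype A] in
theorem inflow_lt_of_riskRatio_pos {E : Finset (S × A)} {e : A → ℝ} {f : S → A → ℝ}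
    {j : A} (hj : 0 < e j) (hr : 0 < riskRatio E e f j) : inflow E f j < e j := by
  rw [riskRatio_eq, div_pos_iff_of_pos_right hj] at hr
  linarith

section Augment

variable {E : Finset (S × A)} {f : S → A → ℝ} {i : S} {l : A} {ε : ℝ}

noncomputable def augment (f : S → A → ℝ) (i : S) (l : A) (ε : ℝ) : S → A → ℝ :=
  fun a b => f a b + if (a, b) = (i, l) then ε else 0

omit [Fintype S] in
theorem outflow_augment (hil : (i, l) ∈ E) (a : S) :
    outflow E (augment f i l ε) a = outflow E f a + if a = i then ε else 0 := by
  simp only [outflow, augment, Finset.sum_add_distrib, Prod.mk.injEq]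
  by_cases ha : a = i
  · subst ha
    simp [Finset.sum_ite_eq', hil]
  · simp [ha]

omit [Fintype A] in
theorem inflow_augment (hil : (i, l) ∈ E) (b : A) :
    inflow E (augment f i l ε) b = inflow E f b + if b = l then ε else 0 := by
  simp only [inflow, augment, Finset.sum_add_distrib, Prod.mk.injEq]
  by_cases hb : b = l
  · subst hb
    simp [Finset.sum_ite_eq', hil]
  · simp [hb]

omit [Fintype S] [Fintype A] in
theorem flowValue_augment (hil : (i, l) ∈ E) :
    flowValue E (augment f i l ε) = flowValue E f + ε := by
  simp [flowValue, augment, Finset.sum_add_distrib, Finset.sum_ite_eq', hil]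

theorem Feasible.augment {v : S → ℝ} {e : A → ℝ} (hf : Feasible E v e f)
    (hil : (i, l) ∈ E) (hε : 0 ≤ ε) (hi : outflow E f i + ε ≤ v i)
    (hl : inflow E f l + ε ≤ e l) : Feasible E v e (augment f i l ε) := by
  obtain ⟨hnonneg, hzero, hout, hin⟩ := hf
  refine ⟨fun a b hab => ?_, fun a b hab => ?_, fun a => ?_, fun b => ?_⟩
  · have := hnonneg a b hab
    simp only [_root_.augment]
    split_ifs <;> linarith
  · have hne : (a, b) ≠ (i, l) := fun h => hab (h ▸ hil)
    simp [_root_.augment, hzero a b hab, hne]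
  · change outflow E _ a ≤ v a
    rw [outflow_augment hil]
    split_ifs with ha
    · exact ha ▸ hi
    · rw [add_zero]; exact hout a
  · change inflow E _ b ≤ e b
    rw [inflow_augment hil]
    split_ifs with hb
    · exact hb ▸ hl
    · rw [add_zero]; exact hin b

end Augment

theorem IsMaxFlow.outflow_eq_of_inflow_lt {E : Finset (S × A)} {v : S → ℝ} {e : A → ℝ}
    {f : S → A → ℝ} (hf : IsMaxFlow E v e f) {i : S} {l : A} (hil : (i, l) ∈ E)
    (hl : inflow E f l < e l) : outflow E f i = v i := by
  by_contra hne
  have hi : outflow E f i < v i := lt_of_le_of_ne (hf.1.2.2.1 i) hne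
  set ε := min (v i - outflow E f i) (e l - inflow E f l)
  have hε : 0 < ε := lt_min (by linarith) (by linarith)
  have hfeas : Feasible E v e (augment f i l ε) :=
    hf.1.augment hil hε.le (by linarith [min_le_left (v i - outflow E f i) (e l - inflow E f l)])
      (by linarith [min_le_right (v i - outflow E f i) (e l - inflow E f l)])
  have := hf.2 _ hfeas
  rw [flowValue_augment hil] at this
  linarith

theorem RatioBalanced.sum_riskRatio_mul_le {E : Finset (S × A)} {v : S → ℝ} {e : A → ℝ}
    (he : ∀ j, 0 < e j) {f g : S → A → ℝ} (hf : RatioBalanced E v e f)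
    (hg : Feasible E v e g) (i : S) :
    ∑ j ∈ Finset.univ.filter (fun j => (i, j) ∈ E), riskRatio E e f j * g i j ≤
      ∑ j ∈ Finset.univ.filter (fun j => (i, j) ∈ E), riskRatio E e f j * f i j := by
  set N := Finset.univ.filter (fun j => (i, j) ∈ E)
  set r := riskRatio E e f
  rcases N.eq_empty_or_nonempty with hN | hN
  · simp [hN]
  obtain ⟨l, hlN, hmax⟩ := N.exists_max_image r hN
  have hil : (i, l) ∈ E := (Finset.mem_filter.mp hlN).2
  have hrl : 0 ≤ r l := hf.1.1.riskRatio_nonneg (he l)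
  have hf_sum : ∑ j ∈ N, r j * f i j = r l * outflow E f i := by
    rw [outflow, Finset.mul_sum]
    refine Finset.sum_congr rfl fun j hj => ?_
    have hij : (i, j) ∈ E := (Finset.mem_filter.mp hj).2
    rcases (hf.1.1.1 i j hij).eq_or_lt with h0 | hpos
    · simp [← h0]
    · rw [le_antisymm (hmax j hj) (hf.2 i j l hij hpos hil)]
  have hsat : r l * outflow E f i = r l * v i := by
    rcases hrl.eq_or_lt with h0 | hpos
    · simp [← h0]
    · rw [hf.1.outflow_eq_of_inflow_lt hil (inflow_lt_of_riskRatio_pos (he l) hpos)]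
  calc ∑ j ∈ N, r j * g i j
      ≤ ∑ j ∈ N, r l * g i j :=
        Finset.sum_le_sum fun j hj =>
          mul_le_mul_of_nonneg_right (hmax j hj) (hg.1 i j (Finset.mem_filter.mp hj).2)
    _ = r l * outflow E g i := (Finset.mul_sum _ _ _).symm
    _ ≤ r l * v i := mul_le_mul_of_nonneg_left (hg.2.2.1 i) hrl
    _ = ∑ j ∈ N, r j * f i j := by rw [hf_sum, hsat]

theorem sum_mul_inflow (E : Finset (S × A)) (r : A → ℝ) (h : S → A → ℝ) :
    ∑ j, r j * inflow E h j
      = ∑ i, ∑ j ∈ Finset.univ.filter (fun j => (i, j) ∈ E), r j * h i j := by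
  simp_rw [inflow, Finset.mul_sum, Finset.sum_filter]
  exact Finset.sum_comm

theorem RatioBalanced.sum_riskRatio_mul_inflow_le {E : Finset (S × A)} {v : S → ℝ}
    {e : A → ℝ} (he : ∀ j, 0 < e j) {f g : S → A → ℝ} (hf : RatioBalanced E v e f)
    (hg : Feasible E v e g) :
    ∑ j, riskRatio E e f j * inflow E g j ≤ ∑ j, riskRatio E e f j * inflow E f j := by
  rw [sum_mul_inflow, sum_mul_inflow]
  exact Finset.sum_le_sum fun i _ => hf.sum_riskRatio_mul_le he hg i

theorem ratioBalanced_equivalent_general (E : Finset (S × A)) (v : S → ℝ) (e : A → ℝ)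
    (he : ∀ j, 0 < e j)
    (f g : S → A → ℝ) (hf : RatioBalanced E v e f) (hg : RatioBalanced E v e g) :
    ∀ j : A, riskRatio E e f j = riskRatio E e g j := by
  have hfg := hf.sum_riskRatio_mul_inflow_le he hg.1.1
  have hgf := hg.sum_riskRatio_mul_inflow_le he hf.1.1
  have hterm : ∀ j, (riskRatio E e f j - riskRatio E e g j) * (inflow E f j - inflow E g j)
      = -(e j * (riskRatio E e f j - riskRatio E e g j) ^ 2) := fun j => by
    rw [inflow_sub_inflow E e f g (he j).ne']
    ring
  have hsum : ∑ j, e j * (riskRatio E e f j - riskRatio E e g j) ^ 2 = 0 := by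
    have hnonneg : 0 ≤ ∑ j, (riskRatio E e f j - riskRatio E e g j) *
        (inflow E f j - inflow E g j) := by
      simp only [sub_mul, mul_sub, Finset.sum_sub_distrib]
      linarith
    simp only [hterm, Finset.sum_neg_distrib, neg_nonneg] at hnonneg
    exact le_antisymm hnonneg (Finset.sum_nonneg fun j _ => by have := he j; positivity)
  intro j
  have hj := (Finset.sum_eq_zero_iff_of_nonneg fun j _ => by have := he j; positivity).mp
    hsum j (Finset.mem_univ j)
  simpa [(he j).ne', sub_eq_zero] using hj

/-- Any two ratio-balanced maximum flows are equivalent. -/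
theorem ratioBalanced_equivalent (E : Finset (S × A)) (v : S → ℝ) (e : A → ℝ)
    (hv : ∀ i, 0 ≤ v i) (he : ∀ j, 0 < e j)
    (f g : S → A → ℝ) (hf : RatioBalanced E v e f) (hg : RatioBalanced E v e g) :
    ∀ j : A, riskRatio E e f j = riskRatio E e g j :=
  ratioBalanced_equivalent_general E v e he f g hf hg
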